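/- Max-flow min-cut theorem: in a finite directed network with source s, sink t, and nonnegative real edge capacities, the maximum value of a feasible flow equals the minimum capacity of a source/sink cut. -/
import Mathlib


/-- A feasible flow: `0 ≤ f e ≤ c e` on every edge. -/
def FeasibleFlow {V : Type*} (c f : V → V → ℝ) : Prop :=
  ∀ u v, 0 ≤ f u v ∧ f u v ≤ c u v

/-- Flow conservation at every vertex other than the source `s` and the sink `t`:
total flow in equals total flow out. -/
def Conserved {V : Type*} [Fintype V] (f : V → V → ℝ) (s t : V) : Prop :=
  ∀ v, v ≠ s → v ≠ t → ∑ u, f u v = ∑ w, f v w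

/-- The value of a flow: the net flow out of the source `s`. -/
def flowValue {V : Type*} [Fintype V] (f : V → V → ℝ) (s : V) : ℝ :=
  ∑ w, f s w - ∑ u, f u s

/-- The capacity of the source/sink cut `[S, Sᶜ]`: the sum of capacities of
edges directed from `S` to its complement. -/
def cutCap {V : Type*} [Fintype V] [DecidableEq V] (c : V → V → ℝ) (S : Finset V) : ℝ :=
  ∑ u ∈ S, ∑ v ∈ Sᶜ, c u v

section helpers
variable {V : Type*} [Fintype V] [DecidableEq V]

/-- Shortcut a chain with a repeated vertex to get an injective chain. -/
lemma dedup_chain {α : Type*} (R : α → α → Prop) :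
    ∀ n : ℕ, ∀ q : ℕ → α, (∀ i < n, R (q i) (q (i+1))) →
      ∃ (m : ℕ) (p : ℕ → α), p 0 = q 0 ∧ p m = q n ∧
        (∀ i < m, R (p i) (p (i+1))) ∧ (∀ i ≤ m, ∀ j ≤ m, p i = p j → i = j) := by
  intro n
  induction n using Nat.strong_induction_on with
  | _ n ih =>
    intro q hch
    by_cases hinj : ∀ i ≤ n, ∀ j ≤ n, q i = q j → i = j
    · exact ⟨n, q, rfl, rfl, hch, hinj⟩
    · push_neg at hinj
      obtain ⟨i₀, hi₀, j₀, hj₀, heq₀, hne₀⟩ := hinj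
      -- wlog i < j
      obtain ⟨i, j, hij, hjn, heq⟩ : ∃ i j, i < j ∧ j ≤ n ∧ q i = q j := by
        rcases Nat.lt_or_ge i₀ j₀ with h | h
        · exact ⟨i₀, j₀, h, hj₀, heq₀⟩
        · exact ⟨j₀, i₀, by omega, hi₀, heq₀.symm⟩
      set d := j - i with hd
      have hd1 : 1 ≤ d := by omega
      set n' := n - d with hn'
      set q' : ℕ → α := fun m => if m ≤ i then q m else q (m + d) with hq'
      have hn'lt : n' < n := by omega
      have hch' : ∀ i' < n', R (q' i') (q' (i'+1)) := by
        intro i' hi'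
        rcases lt_trichotomy i' i with h | h | h
        · have : q' i' = q i' := by simp [hq', le_of_lt h]
          have h2 : q' (i'+1) = q (i'+1) := by simp [hq', show i'+1 ≤ i from h]
          rw [this, h2]
          exact hch i' (by omega)
        · subst h
          have h1 : q' i' = q j := by simp [hq', heq]
          have h2 : q' (i'+1) = q (j+1) := by
            have : ¬ (i' + 1 ≤ i') := by omega
            simp only [hq', this, if_false]
            congr 1
            omega
          rw [h1, h2]
          exact hch j (by omega)
        · have h1 : q' i' = q (i' + d) := by
            have : ¬ (i' ≤ i) := by omega
            simp [hq', this]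
          have h2 : q' (i'+1) = q (i' + d + 1) := by
            have : ¬ (i' + 1 ≤ i) := by omega
            simp only [hq', this, if_false]
            congr 1
            omega
          rw [h1, h2]
          exact hch (i' + d) (by omega)
      obtain ⟨m, p, hp0, hpm, hpch, hpinj⟩ := ih n' hn'lt q' hch'
      refine ⟨m, p, ?_, ?_, hpch, hpinj⟩
      · rw [hp0]; simp [hq']
      · rw [hpm]
        rcases Nat.lt_or_ge i n' with h | h
        · have : ¬ (n' ≤ i) := by omega
          simp only [hq', this, if_false]
          congr 1
          omega
        · have hni : n' = i := by omega
          have hjn' : j = n := by omega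
          simp only [hq', hni, le_refl, if_true]
          rw [heq, hjn']

lemma exists_inj_chain {α : Type*} (R : α → α → Prop) {s t : α}
    (h : Relation.ReflTransGen R s t) :
    ∃ (n : ℕ) (p : ℕ → α), p 0 = s ∧ p n = t ∧ (∀ i < n, R (p i) (p (i+1))) ∧
      (∀ i ≤ n, ∀ j ≤ n, p i = p j → i = j) := by
  have step1 : ∃ (n : ℕ) (q : ℕ → α), q 0 = s ∧ q n = t ∧ ∀ i < n, R (q i) (q (i+1)) := by
    induction h with
    | refl => exact ⟨0, fun _ => s, rfl, rfl, fun i hi => absurd hi (by omega)⟩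
    | @tail b c hab hbc ih =>
      obtain ⟨n, q, h0, hn, hch⟩ := ih
      refine ⟨n + 1, fun m => if m ≤ n then q m else c, by simp [h0], by simp, ?_⟩
      intro i hi
      rcases Nat.lt_or_ge i n with h | h
      · simp only [show i ≤ n by omega, if_true, show i + 1 ≤ n by omega, if_true]
        exact hch i h
      · have hin : i = n := by omega
        subst hin
        simp only [le_refl, if_true, show ¬ (i + 1 ≤ i) by omega, if_false]
        exact hn ▸ hbc
  obtain ⟨n, q, h0, hn, hch⟩ := step1
  obtain ⟨m, p, hp0, hpm, hpch, hpinj⟩ := dedup_chain R n q hch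
  exact ⟨m, p, h0 ▸ hp0, hn ▸ hpm, hpch, hpinj⟩

lemma flowValue_eq_cut (f : V → V → ℝ) (s t : V) (hcons : Conserved f s t)
    (S : Finset V) (hs : s ∈ S) (ht : t ∉ S) :
    flowValue f s = ∑ u ∈ S, ∑ v ∈ Sᶜ, f u v - ∑ u ∈ Sᶜ, ∑ v ∈ S, f u v := by
  have key : flowValue f s = ∑ v ∈ S, (∑ w, f v w - ∑ u, f u v) := by
    rw [Finset.sum_eq_single_of_mem s hs]
    · rfl
    · intro v hv hvs
      have hvt : v ≠ t := fun h => ht (h ▸ hv)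
      rw [hcons v hvs hvt, sub_self]
  rw [key, Finset.sum_sub_distrib]
  have h1 : ∑ v ∈ S, ∑ w, f v w
      = ∑ v ∈ S, ∑ w ∈ S, f v w + ∑ v ∈ S, ∑ w ∈ Sᶜ, f v w := by
    rw [← Finset.sum_add_distrib]
    exact Finset.sum_congr rfl fun v _ => (Finset.sum_add_sum_compl S _).symm
  have h2 : ∑ v ∈ S, ∑ u, f u v
      = ∑ v ∈ S, ∑ u ∈ S, f u v + ∑ v ∈ S, ∑ u ∈ Sᶜ, f u v := by
    rw [← Finset.sum_add_distrib]
    exact Finset.sum_congr rfl fun v _ => (Finset.sum_add_sum_compl S _).symm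
  rw [h1, h2]
  have h3 : ∑ v ∈ S, ∑ u ∈ S, f u v = ∑ v ∈ S, ∑ w ∈ S, f v w := Finset.sum_comm
  have h4 : ∑ v ∈ S, ∑ u ∈ Sᶜ, f u v = ∑ u ∈ Sᶜ, ∑ v ∈ S, f u v := Finset.sum_comm
  rw [h3, h4]; ring

lemma flowValue_le_cutCap (c f : V → V → ℝ) (s t : V) (hf : FeasibleFlow c f)
    (hcons : Conserved f s t) (S : Finset V) (hs : s ∈ S) (ht : t ∉ S) :
    flowValue f s ≤ cutCap c S := by
  rw [flowValue_eq_cut f s t hcons S hs ht]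
  have h1 : ∑ u ∈ S, ∑ v ∈ Sᶜ, f u v ≤ cutCap c S :=
    Finset.sum_le_sum fun u _ => Finset.sum_le_sum fun v _ => (hf u v).2
  have h2 : (0:ℝ) ≤ ∑ u ∈ Sᶜ, ∑ v ∈ S, f u v :=
    Finset.sum_nonneg fun u _ => Finset.sum_nonneg fun v _ => (hf u v).1
  linarith

lemma exists_max_flow (c : V → V → ℝ) (s t : V) (hc : ∀ u v, 0 ≤ c u v) :
    ∃ f : V → V → ℝ, FeasibleFlow c f ∧ Conserved f s t ∧
      ∀ g : V → V → ℝ, FeasibleFlow c g → Conserved g s t →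
        flowValue g s ≤ flowValue f s := by
  classical
  set K : Set (V → V → ℝ) := {f | FeasibleFlow c f ∧ Conserved f s t} with hK
  have hne : K.Nonempty := by
    refine ⟨fun _ _ => 0, fun u v => ⟨le_refl _, hc u v⟩, fun v _ _ => ?_⟩
    simp
  have happ : ∀ u v : V, Continuous fun f : V → V → ℝ => f u v := fun u v =>
    (continuous_apply v).comp (continuous_apply u)
  have hcont : Continuous fun f : V → V → ℝ => flowValue f s := by
    unfold flowValue
    exact ((continuous_finset_sum _ fun w _ => happ s w).sub
      (continuous_finset_sum _ fun u _ => happ u s))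
  have hKcompact : IsCompact K := by
    have hKeq : K = (Set.univ.pi fun u => Set.univ.pi fun v => Set.Icc 0 (c u v)) ∩
        {f | Conserved f s t} := by
      ext f
      simp only [Set.mem_inter_iff, Set.mem_pi, Set.mem_univ, forall_true_left,
        Set.mem_Icc, hK, Set.mem_setOf_eq, FeasibleFlow]
    rw [hKeq]
    refine (isCompact_univ_pi fun u => isCompact_univ_pi fun v => isCompact_Icc).inter_right ?_
    have : {f : V → V → ℝ | Conserved f s t} =
        ⋂ (v : V), ⋂ (_ : v ≠ s), ⋂ (_ : v ≠ t),
          {f : V → V → ℝ | ∑ u, f u v = ∑ w, f v w} := by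
      ext f; simp [Conserved]
    rw [this]
    refine isClosed_iInter fun v => isClosed_iInter fun _ => isClosed_iInter fun _ => ?_
    exact isClosed_eq (continuous_finset_sum _ fun u _ => happ u v)
      (continuous_finset_sum _ fun w _ => happ v w)
  obtain ⟨f, hfK, hmax⟩ := hKcompact.exists_isMaxOn hne hcont.continuousOn
  exact ⟨f, hfK.1, hfK.2, fun g hg hgc => hmax ⟨hg, hgc⟩⟩

lemma augment (c f : V → V → ℝ) (s t : V)
    (hf : FeasibleFlow c f) (hcons : Conserved f s t)
    (n : ℕ) (hn : 0 < n) (p : ℕ → V)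
    (hinj : ∀ i ≤ n, ∀ j ≤ n, p i = p j → i = j)
    (h0 : p 0 = s) (hnt : p n = t)
    (hres : ∀ i < n, f (p i) (p (i+1)) < c (p i) (p (i+1)) ∨ 0 < f (p (i+1)) (p i)) :
    ∃ g, FeasibleFlow c g ∧ Conserved g s t ∧ flowValue f s < flowValue g s := by
  classical
  set res : ℕ → ℝ :=
    fun i => (c (p i) (p (i+1)) - f (p i) (p (i+1))) + f (p (i+1)) (p i) with hresdef
  have hrespos : ∀ i < n, 0 < res i := by
    intro i hi
    have h1 := (hf (p i) (p (i+1))).2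
    have h2 := (hf (p (i+1)) (p i)).1
    rcases hres i hi with h | h <;> simp only [hresdef] <;> linarith
  have hrne : (Finset.range n).Nonempty := Finset.nonempty_range_iff.2 hn.ne'
  set ε : ℝ := (Finset.range n).inf' hrne res with hεdef
  have hε : 0 < ε := by
    rw [hεdef, Finset.lt_inf'_iff]
    intro i hi
    exact hrespos i (Finset.mem_range.1 hi)
  have hεle : ∀ i < n, ε ≤ res i := fun i hi =>
    Finset.inf'_le res (Finset.mem_range.2 hi)
  set x : ℕ → ℝ := fun i => min ε (c (p i) (p (i+1)) - f (p i) (p (i+1))) with hxdef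
  set y : ℕ → ℝ := fun i => ε - x i with hydef
  have hx0 : ∀ i < n, 0 ≤ x i := fun i hi =>
    le_min hε.le (sub_nonneg.2 (hf _ _).2)
  have hxc : ∀ i, x i ≤ c (p i) (p (i+1)) - f (p i) (p (i+1)) := fun i => min_le_right _ _
  have hxε : ∀ i, x i ≤ ε := fun i => min_le_left _ _
  have hy0 : ∀ i, 0 ≤ y i := fun i => sub_nonneg.2 (hxε i)
  have hyf : ∀ i < n, y i ≤ f (p (i+1)) (p i) := by
    intro i hi
    have hle := hεle i hi
    have h2 := (hf (p (i+1)) (p i)).1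
    rcases min_cases ε (c (p i) (p (i+1)) - f (p i) (p (i+1))) with ⟨hm, hle'⟩ | ⟨hm, hle'⟩ <;>
      simp only [hydef, hxdef, hm, hresdef] at * <;> linarith
  have hxy : ∀ i, x i + y i = ε := fun i => by simp [hydef]
  set X : V → V → ℝ := fun u v =>
    ∑ i ∈ Finset.range n, (if p i = u ∧ p (i+1) = v then x i else 0) with hXdef
  set Y : V → V → ℝ := fun u v =>
    ∑ i ∈ Finset.range n, (if p (i+1) = u ∧ p i = v then y i else 0) with hYdef
  set g : V → V → ℝ := fun u v => f u v + X u v - Y u v with hgdef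
  -- Feasibility
  have hgfeas : FeasibleFlow c g := by
    intro u v
    have hfuv := hf u v
    by_cases hXe : ∃ i < n, p i = u ∧ p (i+1) = v
    · obtain ⟨i, hi, hpu, hpv⟩ := hXe
      have hXval : X u v = x i := by
        simp only [hXdef]
        rw [Finset.sum_eq_single_of_mem i (Finset.mem_range.2 hi)]
        · simp [hpu, hpv]
        · intro j hj hji
          have hj' := Finset.mem_range.1 hj
          by_cases hcnd : p j = u ∧ p (j+1) = v
          · exact absurd (hinj j hj'.le i hi.le (hcnd.1.trans hpu.symm)) hji
          · simp [hcnd]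
      have hYval : Y u v = 0 := by
        simp only [hYdef]
        refine Finset.sum_eq_zero fun j hj => ?_
        have hj' := Finset.mem_range.1 hj
        by_cases hcnd : p (j+1) = u ∧ p j = v
        · exfalso
          have hji : j = i + 1 :=
            hinj j hj'.le (i+1) (by omega) (hcnd.2.trans hpv.symm)
          have : j + 1 = i := hinj (j+1) (by omega) i hi.le (hcnd.1.trans hpu.symm)
          omega
        · simp [hcnd]
      constructor
      · simp only [hgdef]; simp only [hXval, hYval]
        have := hx0 i hi
        linarith [hfuv.1]
      · simp only [hgdef]; simp only [hXval, hYval]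
        have := hxc i
        rw [hpu, hpv] at this
        linarith
    · have hXval : X u v = 0 := by
        simp only [hXdef]
        refine Finset.sum_eq_zero fun j hj => ?_
        by_cases hcnd : p j = u ∧ p (j+1) = v
        · exact absurd ⟨j, Finset.mem_range.1 hj, hcnd⟩ hXe
        · simp [hcnd]
      by_cases hYe : ∃ j < n, p (j+1) = u ∧ p j = v
      · obtain ⟨j, hj, hpu, hpv⟩ := hYe
        have hYval : Y u v = y j := by
          simp only [hYdef]
          rw [Finset.sum_eq_single_of_mem j (Finset.mem_range.2 hj)]
          · simp [hpu, hpv]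
          · intro j' hj' hjj
            have hj'' := Finset.mem_range.1 hj'
            by_cases hcnd : p (j'+1) = u ∧ p j' = v
            · exact absurd (hinj j' hj''.le j hj.le (hcnd.2.trans hpv.symm)) hjj
            · simp [hcnd]
        constructor
        · simp only [hgdef]; simp only [hXval, hYval]
          have := hyf j hj
          rw [hpu, hpv] at this
          linarith
        · simp only [hgdef]; simp only [hXval, hYval]
          have := hy0 j
          linarith [hfuv.2]
      · have hYval : Y u v = 0 := by
          simp only [hYdef]
          refine Finset.sum_eq_zero fun j hj => ?_
          by_cases hcnd : p (j+1) = u ∧ p j = v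
          · exact absurd ⟨j, Finset.mem_range.1 hj, hcnd⟩ hYe
          · simp [hcnd]
        simp only [hgdef]; simp only [hXval, hYval]
        constructor <;> linarith [hfuv.1, hfuv.2]
  -- index sum computations
  have sum_shift : ∀ (z : ℕ → ℝ) (m : ℕ), m ≤ n →
      ∑ i ∈ Finset.range n, (if p (i+1) = p m then z i else 0)
        = if m = 0 then 0 else z (m-1) := by
    intro z m hm
    rcases Nat.eq_zero_or_pos m with hm0 | hm0
    · subst hm0
      simp only [if_true]
      refine Finset.sum_eq_zero fun i hi => ?_
      have hi' := Finset.mem_range.1 hi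
      by_cases hcnd : p (i+1) = p 0
      · have := hinj (i+1) (by omega) 0 (by omega) hcnd
        omega
      · simp [hcnd]
    · have hmn : ¬ (m = 0) := by omega
      simp only [hmn, if_false]
      rw [Finset.sum_eq_single_of_mem (m-1) (Finset.mem_range.2 (by omega))]
      · have h1 : m - 1 + 1 = m := by omega
        rw [h1]
        simp
      · intro j hj hjm
        have hj' := Finset.mem_range.1 hj
        by_cases hcnd : p (j+1) = p m
        · have := hinj (j+1) (by omega) m hm hcnd
          omega
        · simp [hcnd]
  have sum_noshift : ∀ (z : ℕ → ℝ) (m : ℕ), m ≤ n →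
      ∑ i ∈ Finset.range n, (if p i = p m then z i else 0)
        = if m = n then 0 else z m := by
    intro z m hm
    rcases Nat.eq_or_lt_of_le hm with hmn | hmn
    · subst hmn
      simp only [if_true]
      refine Finset.sum_eq_zero fun i hi => ?_
      have hi' := Finset.mem_range.1 hi
      by_cases hcnd : p i = p m
      · have := hinj i (by omega) m (by omega) hcnd
        omega
      · simp [hcnd]
    · have hmn' : ¬ (m = n) := by omega
      simp only [hmn', if_false]
      rw [Finset.sum_eq_single_of_mem m (Finset.mem_range.2 hmn)]
      · simp
      · intro j hj hjm
        by_cases hcnd : p j = p m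
        · exact absurd (hinj j (Finset.mem_range.1 hj).le m hm hcnd) hjm
        · simp [hcnd]
  have sum_zero1 : ∀ (z : ℕ → ℝ) (v : V), (∀ m ≤ n, p m ≠ v) →
      ∑ i ∈ Finset.range n, (if p (i+1) = v then z i else 0) = 0 := by
    intro z v hv
    refine Finset.sum_eq_zero fun i hi => ?_
    have := hv (i+1) (by have := Finset.mem_range.1 hi; omega)
    simp [this]
  have sum_zero0 : ∀ (z : ℕ → ℝ) (v : V), (∀ m ≤ n, p m ≠ v) →
      ∑ i ∈ Finset.range n, (if p i = v then z i else 0) = 0 := by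
    intro z v hv
    refine Finset.sum_eq_zero fun i hi => ?_
    have := hv i (by have := Finset.mem_range.1 hi; omega)
    simp [this]
  -- swap sums
  have sumXin : ∀ v, ∑ u, X u v = ∑ i ∈ Finset.range n, (if p (i+1) = v then x i else 0) := by
    intro v
    simp only [hXdef]
    rw [Finset.sum_comm]
    refine Finset.sum_congr rfl fun i _ => ?_
    by_cases h : p (i+1) = v <;> simp [h, Finset.sum_ite_eq]
  have sumYin : ∀ v, ∑ u, Y u v = ∑ i ∈ Finset.range n, (if p i = v then y i else 0) := by
    intro v
    simp only [hYdef]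
    rw [Finset.sum_comm]
    refine Finset.sum_congr rfl fun i _ => ?_
    by_cases h : p i = v <;> simp [h, Finset.sum_ite_eq]
  have sumXout : ∀ v, ∑ w, X v w = ∑ i ∈ Finset.range n, (if p i = v then x i else 0) := by
    intro v
    simp only [hXdef]
    rw [Finset.sum_comm]
    refine Finset.sum_congr rfl fun i _ => ?_
    by_cases h : p i = v <;> simp [h, Finset.sum_ite_eq]
  have sumYout : ∀ v, ∑ w, Y v w = ∑ i ∈ Finset.range n, (if p (i+1) = v then y i else 0) := by
    intro v
    simp only [hYdef]
    rw [Finset.sum_comm]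
    refine Finset.sum_congr rfl fun i _ => ?_
    by_cases h : p (i+1) = v <;> simp [h, Finset.sum_ite_eq]
  -- expansions
  have expand_in : ∀ v, ∑ u, g u v = (∑ u, f u v)
      + (∑ i ∈ Finset.range n, (if p (i+1) = v then x i else 0))
      - (∑ i ∈ Finset.range n, (if p i = v then y i else 0)) := by
    intro v
    simp only [hgdef]
    rw [Finset.sum_sub_distrib, Finset.sum_add_distrib, sumXin, sumYin]
  have expand_out : ∀ v, ∑ w, g v w = (∑ w, f v w)
      + (∑ i ∈ Finset.range n, (if p i = v then x i else 0))
      - (∑ i ∈ Finset.range n, (if p (i+1) = v then y i else 0)) := by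
    intro v
    simp only [hgdef]
    rw [Finset.sum_sub_distrib, Finset.sum_add_distrib, sumXout, sumYout]
  -- conservation
  have hgcons : Conserved g s t := by
    intro v hvs hvt
    rw [expand_in, expand_out]
    have hbase := hcons v hvs hvt
    by_cases hmem : ∃ m ≤ n, p m = v
    · obtain ⟨m, hm, hpm⟩ := hmem
      have hm0 : m ≠ 0 := fun h => hvs (by rw [← hpm, h, h0])
      have hmn : m ≠ n := fun h => hvt (by rw [← hpm, h, hnt])
      rw [← hpm]
      rw [sum_shift x m hm, sum_shift y m hm, sum_noshift x m hm, sum_noshift y m hm]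
      simp only [hm0, hmn, if_false]
      have e1 := hxy (m-1)
      have e2 := hxy m
      rw [hpm, hbase]
      linarith
    · push_neg at hmem
      rw [sum_zero1 x v hmem, sum_zero1 y v hmem, sum_zero0 x v hmem, sum_zero0 y v hmem]
      rw [hbase]
  -- value increase
  have hval : flowValue g s = flowValue f s + ε := by
    unfold flowValue
    rw [expand_in, expand_out, ← h0]
    rw [sum_shift x 0 (by omega), sum_shift y 0 (by omega),
      sum_noshift x 0 (by omega), sum_noshift y 0 (by omega)]
    have hn0 : ¬ ((0:ℕ) = n) := by omega
    simp only [if_true, hn0, if_false]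
    have := hxy 0
    rw [h0]
    linarith
  exact ⟨g, hgfeas, hgcons, by rw [hval]; linarith⟩

end helpers

/-- Max-flow min-cut theorem: in a finite network with nonnegative real edge
capacities there exist a feasible flow `f` of maximum value and a source/sink
cut `[S, Sᶜ]` of minimum capacity whose value and capacity coincide; in
particular the maximum value of a feasible flow equals the minimum capacity
of a source/sink cut. -/
theorem max_flow_min_cut
    {V : Type*} [Fintype V] [DecidableEq V]
    (c : V → V → ℝ) (s t : V) (hst : s ≠ t)
    (hc : ∀ u v, 0 ≤ c u v) :
    ∃ (f : V → V → ℝ) (S : Finset V),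
      FeasibleFlow c f ∧ Conserved f s t ∧ s ∈ S ∧ t ∉ S ∧
      flowValue f s = cutCap c S ∧
      (∀ g : V → V → ℝ, FeasibleFlow c g → Conserved g s t →
          flowValue g s ≤ flowValue f s) ∧
      (∀ S' : Finset V, s ∈ S' → t ∉ S' → cutCap c S ≤ cutCap c S') := by
  classical
  obtain ⟨f, hf, hcons, hmax⟩ := exists_max_flow c s t hc
  set R : V → V → Prop := fun u v => f u v < c u v ∨ 0 < f v u with hR
  set S : Finset V := Finset.univ.filter (fun v => Relation.ReflTransGen R s v) with hS
  have hsS : s ∈ S := by simp [hS, Relation.ReflTransGen.refl]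
  have htS : t ∉ S := by
    intro htS
    simp only [hS, Finset.mem_filter] at htS
    obtain ⟨n, p, h0, hnt, hchain, hinj⟩ := exists_inj_chain R htS.2
    have hn : 0 < n := by
      rcases Nat.eq_zero_or_pos n with h | h
      · exact absurd (h0 ▸ h ▸ hnt) hst
      · exact h
    obtain ⟨g, hg, hgc, hlt⟩ := augment c f s t hf hcons n hn p hinj h0 hnt hchain
    exact absurd (hmax g hg hgc) (not_le.2 hlt)
  -- edges across the cut are saturated / reverse edges empty
  have hsat : ∀ u ∈ S, ∀ v ∈ Sᶜ, f u v = c u v ∧ f v u = 0 := by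
    intro u hu v hv
    simp only [hS, Finset.mem_filter, Finset.mem_compl] at hu hv
    have hnR : ¬ R u v := fun hvu => hv ⟨Finset.mem_univ v, hu.2.tail hvu⟩
    simp only [hR, not_or, not_lt] at hnR
    exact ⟨le_antisymm (hf u v).2 hnR.1, le_antisymm hnR.2 (hf v u).1⟩
  have hval : flowValue f s = cutCap c S := by
    rw [flowValue_eq_cut f s t hcons S hsS htS]
    have h1 : ∑ u ∈ S, ∑ v ∈ Sᶜ, f u v = cutCap c S := by
      refine Finset.sum_congr rfl fun u hu => Finset.sum_congr rfl fun v hv => ?_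
      exact (hsat u hu v hv).1
    have h2 : ∑ u ∈ Sᶜ, ∑ v ∈ S, f u v = 0 := by
      refine Finset.sum_eq_zero fun u hu => Finset.sum_eq_zero fun v hv => ?_
      exact (hsat v hv u hu).2
    rw [h1, h2, sub_zero]
  exact ⟨f, S, hf, hcons, hsS, htS, hval, hmax, fun S' hs' ht' =>
    hval ▸ flowValue_le_cutCap c f s t hf hcons S' hs' ht'⟩
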